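/- arXiv:1604.00474 — 2 statements merged into one kernel-verified Lean document; each statement's English description precedes it below -/
import Mathlib

section
/- Let (M, λ_i) be an AP-space on ℝⁿ with n ≥ 2. The curvature tensor of the connection 𝚪^α_{μν} := Γ^α_{μν} − (1/(n−1)) δ^α_μ C_ν equals the conformally invariant tensor K, i.e. ∂_ν 𝚪^α_{μσ} − ∂_σ 𝚪^α_{μν} + 𝚪^ε_{μσ} 𝚪^α_{εν} − 𝚪^ε_{μν} 𝚪^α_{εσ} = K^α_{μνσ} := (1/(n−1))(δ^α_μ ∂_σ C_ν − δ^α_μ ∂_ν C_σ). -/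
open scoped BigOperators

noncomputable section

/-- Kronecker delta as a real number. -/
def kron {n : ℕ} (α μ : Fin n) : ℝ := if α = μ then 1 else 0

/-- Partial derivative `∂_ν f` of a scalar function on ℝⁿ. -/
def pd {n : ℕ} (ν : Fin n) (f : (Fin n → ℝ) → ℝ) (x : Fin n → ℝ) : ℝ :=
  fderiv ℝ f x (Pi.single ν 1)

/-- Weitzenböck connection `Γ^α_{μν} = Σ_i λ_i^α ∂_ν λ_{i,μ}`. -/
def Wconn {n : ℕ} (lam lamCov : Fin n → (Fin n → ℝ) → Fin n → ℝ)
    (α μ ν : Fin n) (x : Fin n → ℝ) : ℝ :=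
  ∑ i, lam i x α * pd ν (fun y => lamCov i y μ) x

/-- Torsion `Λ^α_{μν}` of the Weitzenböck connection. -/
def tors {n : ℕ} (lam lamCov : Fin n → (Fin n → ℝ) → Fin n → ℝ)
    (α μ ν : Fin n) (x : Fin n → ℝ) : ℝ :=
  Wconn lam lamCov α μ ν x - Wconn lam lamCov α ν μ x

/-- Contracted torsion (basic vector) `C_μ = Λ^ε_{εμ}`. -/
def Cvec {n : ℕ} (lam lamCov : Fin n → (Fin n → ℝ) → Fin n → ℝ)
    (μ : Fin n) (x : Fin n → ℝ) : ℝ :=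
  ∑ ε, tors lam lamCov ε ε μ x

/-- Metric `g_{μν} = Σ_i λ_{i,μ} λ_{i,ν}`. -/
def gmet {n : ℕ} (lamCov : Fin n → (Fin n → ℝ) → Fin n → ℝ)
    (μ ν : Fin n) (x : Fin n → ℝ) : ℝ :=
  ∑ i, lamCov i x μ * lamCov i x ν

/-- Inverse metric `g^{μν} = Σ_i λ_i^μ λ_i^ν`. -/
def ginv {n : ℕ} (lam : Fin n → (Fin n → ℝ) → Fin n → ℝ)
    (μ ν : Fin n) (x : Fin n → ℝ) : ℝ :=
  ∑ i, lam i x μ * lam i x ν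

/-- Levi-Civita connection (Christoffel symbols) of the metric `g`. -/
def LC {n : ℕ} (lam lamCov : Fin n → (Fin n → ℝ) → Fin n → ℝ)
    (α μ ν : Fin n) (x : Fin n → ℝ) : ℝ :=
  (1/2) * ∑ ε, ginv lam α ε x *
    (pd μ (fun y => gmet lamCov ε ν y) x + pd ν (fun y => gmet lamCov ε μ y) x
      - pd ε (fun y => gmet lamCov μ ν y) x)

/-- Curvature tensor `R[A]^α_{μνσ}` of connection coefficients `A`. -/
def curv {n : ℕ} (A : Fin n → Fin n → Fin n → (Fin n → ℝ) → ℝ)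
    (α μ ν σ : Fin n) (x : Fin n → ℝ) : ℝ :=
  pd ν (A α μ σ) x - pd σ (A α μ ν) x
    + ∑ ε, A ε μ σ x * A α ε ν x - ∑ ε, A ε μ ν x * A α ε σ x

/-- Conformal change of the contravariant components: `λ̄_i^μ = e^{-ρ} λ_i^μ`. -/
def confLam {n : ℕ} (ρ : (Fin n → ℝ) → ℝ) (lam : Fin n → (Fin n → ℝ) → Fin n → ℝ) :
    Fin n → (Fin n → ℝ) → Fin n → ℝ :=
  fun i x μ => Real.exp (-(ρ x)) * lam i x μ

/-- Conformal change of the covariant components: `λ̄_{i,μ} = e^{ρ} λ_{i,μ}`. -/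
def confLamCov {n : ℕ} (ρ : (Fin n → ℝ) → ℝ) (lamCov : Fin n → (Fin n → ℝ) → Fin n → ℝ) :
    Fin n → (Fin n → ℝ) → Fin n → ℝ :=
  fun i x μ => Real.exp (ρ x) * lamCov i x μ

/-- `ρ^α := g^{αε} ρ_ε`. -/
def rhoUp {n : ℕ} (lam : Fin n → (Fin n → ℝ) → Fin n → ℝ) (ρ : (Fin n → ℝ) → ℝ)
    (α : Fin n) (x : Fin n → ℝ) : ℝ :=
  ∑ ε, ginv lam α ε x * pd ε ρ x

/-- `ρ² := ρ^ε ρ_ε`. -/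
def rhoSq {n : ℕ} (lam : Fin n → (Fin n → ℝ) → Fin n → ℝ) (ρ : (Fin n → ℝ) → ℝ)
    (x : Fin n → ℝ) : ℝ :=
  ∑ ε, rhoUp lam ρ ε x * pd ε ρ x

/-- Covariant derivative of a covector field: `X_{μ|ν} = ∂_ν X_μ − A^ε_{μν} X_ε`. -/
def covD {n : ℕ} (A : Fin n → Fin n → Fin n → (Fin n → ℝ) → ℝ)
    (X : Fin n → (Fin n → ℝ) → ℝ) (μ ν : Fin n) (x : Fin n → ℝ) : ℝ :=
  pd ν (X μ) x - ∑ ε, A ε μ ν x * X ε x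

/-- Covariant derivative of a vector field: `X^α_{|ν} = ∂_ν X^α + A^α_{εν} X^ε`. -/
def covDUp {n : ℕ} (A : Fin n → Fin n → Fin n → (Fin n → ℝ) → ℝ)
    (X : Fin n → (Fin n → ℝ) → ℝ) (α ν : Fin n) (x : Fin n → ℝ) : ℝ :=
  pd ν (X α) x + ∑ ε, A α ε ν x * X ε x

/-- Symmetric part `Γ̂^α_{μν}` of the Weitzenböck connection. -/
def symW {n : ℕ} (lam lamCov : Fin n → (Fin n → ℝ) → Fin n → ℝ)
    (α μ ν : Fin n) (x : Fin n → ℝ) : ℝ :=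
  (1/2) * (Wconn lam lamCov α μ ν x + Wconn lam lamCov α ν μ x)

/-- The conformally invariant tensor `T^α_{μν}`. -/
def Ttens {n : ℕ} (lam lamCov : Fin n → (Fin n → ℝ) → Fin n → ℝ)
    (α μ ν : Fin n) (x : Fin n → ℝ) : ℝ :=
  tors lam lamCov α μ ν x
    - ((n : ℝ) - 1)⁻¹ * (kron α μ * Cvec lam lamCov ν x - kron α ν * Cvec lam lamCov μ x)

/-- The conformally invariant tensor `K^α_{μνσ}`. -/
def Ktens {n : ℕ} (lam lamCov : Fin n → (Fin n → ℝ) → Fin n → ℝ)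
    (α μ ν σ : Fin n) (x : Fin n → ℝ) : ℝ :=
  ((n : ℝ) - 1)⁻¹ *
    (kron α μ * pd σ (Cvec lam lamCov ν) x - kron α μ * pd ν (Cvec lam lamCov σ) x)

/-- The conformal connection `𝚪^α_{μν} = Γ^α_{μν} − (1/(n−1)) δ^α_μ C_ν`. -/
def bConn {n : ℕ} (lam lamCov : Fin n → (Fin n → ℝ) → Fin n → ℝ)
    (α μ ν : Fin n) (x : Fin n → ℝ) : ℝ :=
  Wconn lam lamCov α μ ν x - ((n : ℝ) - 1)⁻¹ * (kron α μ * Cvec lam lamCov ν x)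

/-- The conformal connection `𝚪̂^α_{μν} = Γ̂^α_{μν} − (1/(2(n−1)))(δ^α_μ C_ν + δ^α_ν C_μ)`. -/
def hatConn {n : ℕ} (lam lamCov : Fin n → (Fin n → ℝ) → Fin n → ℝ)
    (α μ ν : Fin n) (x : Fin n → ℝ) : ℝ :=
  symW lam lamCov α μ ν x
    - (2 * ((n : ℝ) - 1))⁻¹ * (kron α μ * Cvec lam lamCov ν x + kron α ν * Cvec lam lamCov μ x)

/-- `C_{μ ĥ|ν}`: covariant derivative of `C` with respect to `Γ̂`. -/
def Chat {n : ℕ} (lam lamCov : Fin n → (Fin n → ℝ) → Fin n → ℝ)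
    (μ ν : Fin n) (x : Fin n → ℝ) : ℝ :=
  covD (symW lam lamCov) (Cvec lam lamCov) μ ν x

/-- The conformally invariant tensor `B^α_{μνσ}`. -/
def Btens {n : ℕ} (lam lamCov : Fin n → (Fin n → ℝ) → Fin n → ℝ)
    (α μ ν σ : Fin n) (x : Fin n → ℝ) : ℝ :=
  curv (symW lam lamCov) α μ ν σ x
    - (2 * ((n : ℝ) - 1))⁻¹ *
      (kron α μ * pd ν (Cvec lam lamCov σ) x - kron α μ * pd σ (Cvec lam lamCov ν) x
        + kron α σ * Chat lam lamCov μ ν x - kron α ν * Chat lam lamCov μ σ x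
        - (2 * ((n : ℝ) - 1))⁻¹ * kron α ν * Cvec lam lamCov μ x * Cvec lam lamCov σ x
        + (2 * ((n : ℝ) - 1))⁻¹ * kron α σ * Cvec lam lamCov μ x * Cvec lam lamCov ν x)

/-- `C^σ := g^{σε} C_ε`. -/
def Cup {n : ℕ} (lam lamCov : Fin n → (Fin n → ℝ) → Fin n → ℝ)
    (σ : Fin n) (x : Fin n → ℝ) : ℝ :=
  ∑ ε, ginv lam σ ε x * Cvec lam lamCov ε x

/-- `C² := C_ε C^ε = g^{εη} C_ε C_η`. -/
def Csq {n : ℕ} (lam lamCov : Fin n → (Fin n → ℝ) → Fin n → ℝ)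
    (x : Fin n → ℝ) : ℝ :=
  ∑ ε, Cvec lam lamCov ε x * Cup lam lamCov ε x

/-- The tensor `S_{μν} := ρ_{μ;ν} − ρ_μ ρ_ν − ½ g_{μν} ρ²`. -/
def Stens {n : ℕ} (lam lamCov : Fin n → (Fin n → ℝ) → Fin n → ℝ)
    (ρ : (Fin n → ℝ) → ℝ) (μ ν : Fin n) (x : Fin n → ℝ) : ℝ :=
  covD (LC lam lamCov) (fun μ => pd μ ρ) μ ν x
    - pd μ ρ x * pd ν ρ x - (1/2) * gmet lamCov μ ν x * rhoSq lam ρ x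

/-- The conformal connection `𝚪°^α_{μν} = Γ°^α_{μν} − (1/(n−1))(δ^α_μ C_ν + δ^α_ν C_μ − g_{μν} C^α)`. -/
def oConn {n : ℕ} (lam lamCov : Fin n → (Fin n → ℝ) → Fin n → ℝ)
    (α μ ν : Fin n) (x : Fin n → ℝ) : ℝ :=
  LC lam lamCov α μ ν x
    - ((n : ℝ) - 1)⁻¹ *
      (kron α μ * Cvec lam lamCov ν x + kron α ν * Cvec lam lamCov μ x
        - gmet lamCov μ ν x * Cup lam lamCov α x)

end

noncomputable section Helpers
variable {n : ℕ}

lemma contDiff_pd' {f : (Fin n → ℝ) → ℝ} (hf : ContDiff ℝ (⊤ : ℕ∞) f) (ν : Fin n) :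
    ContDiff ℝ (⊤ : ℕ∞) (pd ν f) :=
  (hf.fderiv_right (by simp)).clm_apply contDiff_const

lemma pd_sub' {f g : (Fin n → ℝ) → ℝ} {x} (hf : DifferentiableAt ℝ f x)
    (hg : DifferentiableAt ℝ g x) (ν : Fin n) :
    pd ν (fun y => f y - g y) x = pd ν f x - pd ν g x := by
  simp [pd, fderiv_fun_sub hf hg]

lemma pd_const_mul' {f : (Fin n → ℝ) → ℝ} {x} (hf : DifferentiableAt ℝ f x) (a : ℝ) (ν : Fin n) :
    pd ν (fun y => a * f y) x = a * pd ν f x := by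
  simp [pd, fderiv_const_mul hf a]

lemma pd_mul' {f g : (Fin n → ℝ) → ℝ} {x} (hf : DifferentiableAt ℝ f x)
    (hg : DifferentiableAt ℝ g x) (ν : Fin n) :
    pd ν (fun y => f y * g y) x = f x * pd ν g x + g x * pd ν f x := by
  simp [pd, fderiv_fun_mul hf hg]

lemma pd_sum' {ι : Type*} {s : Finset ι} {f : ι → (Fin n → ℝ) → ℝ} {x}
    (hf : ∀ i ∈ s, DifferentiableAt ℝ (f i) x) (ν : Fin n) :
    pd ν (fun y => ∑ i ∈ s, f i y) x = ∑ i ∈ s, pd ν (f i) x := by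
  simp [pd, fderiv_fun_sum hf]

lemma pd_const' (a : ℝ) (ν : Fin n) (x : Fin n → ℝ) : pd ν (fun _ => a) x = 0 := by
  simp [pd]

lemma pd_comm' {f : (Fin n → ℝ) → ℝ} (hf : ContDiff ℝ (⊤ : ℕ∞) f) (ν σ : Fin n) (x : Fin n → ℝ) :
    pd ν (pd σ f) x = pd σ (pd ν f) x := by
  have hsymm : IsSymmSndFDerivAt ℝ f x :=
    hf.contDiffAt.isSymmSndFDerivAt (by rw [minSmoothness_of_isRCLikeNormedField]; exact WithTop.coe_le_coe.mpr (le_top : (2 : ℕ∞) ≤ ⊤))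
  have hd : DifferentiableAt ℝ (fderiv ℝ f) x :=
    ((hf.fderiv_right (m := (⊤ : ℕ∞)) (by simp)).differentiable (by simp)).differentiableAt
  have key : ∀ v w : Fin n → ℝ,
      fderiv ℝ (fun y => fderiv ℝ f y v) x w = fderiv ℝ (fderiv ℝ f) x w v := by
    intro v w
    rw [fderiv_clm_apply hd (differentiableAt_const v)]
    simp
  show fderiv ℝ (fun y => fderiv ℝ f y (Pi.single σ 1)) x (Pi.single ν 1) = _
  rw [key, hsymm]
  exact (key _ _).symm

lemma sum_kron_mul (α : Fin n) (f : Fin n → ℝ) : ∑ ε, kron α ε * f ε = f α := by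
  simp [kron, ite_mul]

lemma sum_kron_mul' (μ : Fin n) (f : Fin n → ℝ) : ∑ ε, kron ε μ * f ε = f μ := by
  simp [kron, ite_mul]

lemma triple_sum (a c : Fin n → ℝ) (b d : Fin n → Fin n → ℝ)
    (h : ∀ i j, ∑ ε, b i ε * d j ε = kron i j) :
    ∑ ε, (∑ i, b i ε * a i) * (∑ j, c j * d j ε) = ∑ i, a i * c i := by
  have step : ∀ i, ∑ ε, (b i ε * a i) * (∑ j, c j * d j ε) = a i * c i := by
    intro i
    have h1 : ∀ ε, (b i ε * a i) * (∑ j, c j * d j ε)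
        = ∑ j, a i * c j * (b i ε * d j ε) := by
      intro ε
      rw [Finset.mul_sum]
      exact Finset.sum_congr rfl fun j _ => by ring
    rw [Finset.sum_congr rfl fun ε _ => h1 ε, Finset.sum_comm]
    have h2 : ∀ j, ∑ ε, a i * c j * (b i ε * d j ε) = a i * c j * kron i j := by
      intro j
      rw [← Finset.mul_sum, h i j]
    rw [Finset.sum_congr rfl fun j _ => h2 j]
    simp [kron, mul_ite]
  calc ∑ ε, (∑ i, b i ε * a i) * (∑ j, c j * d j ε)
      = ∑ ε, ∑ i, (b i ε * a i) * (∑ j, c j * d j ε) :=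
        Finset.sum_congr rfl fun ε _ => by rw [Finset.sum_mul]
    _ = ∑ i, ∑ ε, (b i ε * a i) * (∑ j, c j * d j ε) := Finset.sum_comm
    _ = ∑ i, a i * c i := Finset.sum_congr rfl fun i _ => step i

end Helpers

theorem bConn_curvature_eq_Ktens
    {n : ℕ} (hn : 2 ≤ n)
    (lam lamCov : Fin n → (Fin n → ℝ) → Fin n → ℝ)
    (hlam : ∀ i μ, ContDiff ℝ (⊤ : ℕ∞) fun x => lam i x μ)
    (hlamCov : ∀ i μ, ContDiff ℝ (⊤ : ℕ∞) fun x => lamCov i x μ)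
    (hinv : ∀ (x : Fin n → ℝ) (μ ν : Fin n), ∑ i, lam i x μ * lamCov i x ν = kron μ ν)
    (hinv' : ∀ (x : Fin n → ℝ) (i j : Fin n), ∑ μ, lam i x μ * lamCov j x μ = kron i j)
    :
    ∀ (x : Fin n → ℝ) (α μ ν σ : Fin n),
      curv (bConn lam lamCov) α μ ν σ x = Ktens lam lamCov α μ ν σ x := by
  -- differentiability basics
  have hLamd : ∀ (i α : Fin n) (x), DifferentiableAt ℝ (fun y => lam i y α) x :=
    fun i α x => ((hlam i α).differentiable (by simp)).differentiableAt
  have hCovd : ∀ (i μ : Fin n) (x), DifferentiableAt ℝ (fun y => lamCov i y μ) x :=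
    fun i μ x => ((hlamCov i μ).differentiable (by simp)).differentiableAt
  have hpdCovd : ∀ (i μ ν : Fin n) (x), DifferentiableAt ℝ (pd ν (fun y => lamCov i y μ)) x :=
    fun i μ ν x => ((contDiff_pd' (hlamCov i μ) ν).differentiable (by simp)).differentiableAt
  have hW : ∀ α μ ν : Fin n, ContDiff ℝ (⊤ : ℕ∞) (fun x => Wconn lam lamCov α μ ν x) := by
    intro α μ ν
    unfold Wconn
    exact ContDiff.sum fun i _ => (hlam i α).mul (contDiff_pd' (hlamCov i μ) ν)
  have hWd : ∀ (α μ ν : Fin n) (x), DifferentiableAt ℝ (Wconn lam lamCov α μ ν) x :=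
    fun α μ ν x => ((hW α μ ν).differentiable (by simp)).differentiableAt
  have hC : ∀ μ : Fin n, ContDiff ℝ (⊤ : ℕ∞) (fun x => Cvec lam lamCov μ x) := by
    intro μ
    unfold Cvec tors
    exact ContDiff.sum fun ε _ => (hW ε ε μ).sub (hW ε μ ε)
  have hCd : ∀ (μ : Fin n) (x), DifferentiableAt ℝ (Cvec lam lamCov μ) x :=
    fun μ x => ((hC μ).differentiable (by simp)).differentiableAt
  -- derivative of bConn
  have pdB : ∀ (x) (τ α μ ν : Fin n),
      pd τ (bConn lam lamCov α μ ν) x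
        = pd τ (Wconn lam lamCov α μ ν) x
          - ((n : ℝ) - 1)⁻¹ * (kron α μ * pd τ (Cvec lam lamCov ν) x) := by
    intro x τ α μ ν
    have h1 : bConn lam lamCov α μ ν
        = fun y => Wconn lam lamCov α μ ν y
            - (((n : ℝ) - 1)⁻¹ * kron α μ) * Cvec lam lamCov ν y := by
      funext y; simp [bConn]; ring
    rw [h1, pd_sub' (hWd α μ ν x) ((hCd ν x).const_mul _) τ,
      pd_const_mul' (hCd ν x) _ τ]
    ring
  -- the swap identity
  have swap : ∀ (x) (ν α μ : Fin n),
      Wconn lam lamCov α μ ν x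
        = ∑ i, (-(pd ν (fun y => lam i y α) x)) * lamCov i x μ := by
    intro x ν α μ
    have h0 : pd ν (fun y => ∑ i, lam i y α * lamCov i y μ) x = 0 := by
      have he : (fun y => ∑ i, lam i y α * lamCov i y μ) = fun _ => kron α μ :=
        funext fun y => hinv y α μ
      rw [he, pd_const']
    rw [pd_sum' (fun i _ => (hLamd i α x).fun_mul (hCovd i μ x)) ν] at h0
    rw [Finset.sum_congr rfl (fun i _ => pd_mul' (hLamd i α x) (hCovd i μ x) ν)] at h0
    rw [Finset.sum_add_distrib] at h0
    unfold Wconn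
    have : ∑ i, (-(pd ν (fun y => lam i y α) x)) * lamCov i x μ
        = -∑ i, lamCov i x μ * pd ν (fun y => lam i y α) x := by
      rw [← Finset.sum_neg_distrib]
      exact Finset.sum_congr rfl fun i _ => by ring
    rw [this]
    linarith [h0]
  -- derivative of Wconn
  have pdW : ∀ (x) (τ α μ ν : Fin n),
      pd τ (Wconn lam lamCov α μ ν) x
        = ∑ i, (pd τ (fun y => lam i y α) x * pd ν (fun y => lamCov i y μ) x
            + lam i x α * pd τ (pd ν (fun y => lamCov i y μ)) x) := by
    intro x τ α μ ν
    have h1 : Wconn lam lamCov α μ ν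
        = fun y => ∑ i, lam i y α * pd ν (fun y' => lamCov i y' μ) y := rfl
    rw [h1, pd_sum' (fun i _ => (hLamd i α x).fun_mul (hpdCovd i μ ν x)) τ]
    exact Finset.sum_congr rfl fun i _ => by
      rw [pd_mul' (hLamd i α x) (hpdCovd i μ ν x) τ]; ring
  -- curvature of Weitzenböck connection vanishes
  have curvW : ∀ (x) (α μ ν σ : Fin n), curv (Wconn lam lamCov) α μ ν σ x = 0 := by
    intro x α μ ν σ
    have quad : ∀ ν σ : Fin n,
        ∑ ε, Wconn lam lamCov ε μ σ x * Wconn lam lamCov α ε ν x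
          = ∑ i, pd σ (fun y => lamCov i y μ) x * (-(pd ν (fun y => lam i y α) x)) := by
      intro ν σ
      calc ∑ ε, Wconn lam lamCov ε μ σ x * Wconn lam lamCov α ε ν x
          = ∑ ε, (∑ i, lam i x ε * pd σ (fun y => lamCov i y μ) x)
              * (∑ j, (-(pd ν (fun y => lam j y α) x)) * lamCov j x ε) :=
            Finset.sum_congr rfl fun ε _ => by rw [swap x ν α ε]; rfl
        _ = ∑ i, pd σ (fun y => lamCov i y μ) x * (-(pd ν (fun y => lam i y α) x)) :=
            triple_sum _ _ _ _ (fun i j => hinv' x i j)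
    unfold curv
    rw [pdW x ν α μ σ, pdW x σ α μ ν, quad ν σ, quad σ ν]
    simp only [← Finset.sum_sub_distrib, ← Finset.sum_add_distrib]
    apply Finset.sum_eq_zero
    intro i _
    rw [pd_comm' (hlamCov i μ) ν σ x]
    ring
  -- main computation
  intro x α μ ν σ
  have expand : ∀ ν σ : Fin n,
      ∑ ε, bConn lam lamCov ε μ σ x * bConn lam lamCov α ε ν x
        = (∑ ε, Wconn lam lamCov ε μ σ x * Wconn lam lamCov α ε ν x)
          - ((n : ℝ) - 1)⁻¹ * (Cvec lam lamCov ν x * Wconn lam lamCov α μ σ x)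
          - ((n : ℝ) - 1)⁻¹ * (Cvec lam lamCov σ x * Wconn lam lamCov α μ ν x)
          + ((n : ℝ) - 1)⁻¹ * ((n : ℝ) - 1)⁻¹
            * (kron α μ * (Cvec lam lamCov σ x * Cvec lam lamCov ν x)) := by
    intro ν σ
    simp only [bConn]
    have h1 : ∀ ε : Fin n,
        (Wconn lam lamCov ε μ σ x - ((n : ℝ) - 1)⁻¹ * (kron ε μ * Cvec lam lamCov σ x))
          * (Wconn lam lamCov α ε ν x - ((n : ℝ) - 1)⁻¹ * (kron α ε * Cvec lam lamCov ν x))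
        = Wconn lam lamCov ε μ σ x * Wconn lam lamCov α ε ν x
          - kron α ε * (((n : ℝ) - 1)⁻¹ * (Cvec lam lamCov ν x * Wconn lam lamCov ε μ σ x))
          - kron ε μ * (((n : ℝ) - 1)⁻¹ * (Cvec lam lamCov σ x * Wconn lam lamCov α ε ν x))
          + kron ε μ * (kron α ε * (((n : ℝ) - 1)⁻¹ * ((n : ℝ) - 1)⁻¹
              * (Cvec lam lamCov σ x * Cvec lam lamCov ν x))) := fun ε => by ring
    rw [Finset.sum_congr rfl fun ε _ => h1 ε]
    simp only [Finset.sum_add_distrib, Finset.sum_sub_distrib]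
    rw [sum_kron_mul α
        (fun ε => ((n : ℝ) - 1)⁻¹ * (Cvec lam lamCov ν x * Wconn lam lamCov ε μ σ x)),
      sum_kron_mul' μ
        (fun ε => ((n : ℝ) - 1)⁻¹ * (Cvec lam lamCov σ x * Wconn lam lamCov α ε ν x)),
      sum_kron_mul' μ
        (fun ε => kron α ε * (((n : ℝ) - 1)⁻¹ * ((n : ℝ) - 1)⁻¹
          * (Cvec lam lamCov σ x * Cvec lam lamCov ν x)))]
    ring
  have h0 := curvW x α μ ν σ
  unfold curv at h0 ⊢
  rw [pdB x ν α μ σ, pdB x σ α μ ν, expand ν σ, expand σ ν]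
  unfold Ktens
  linear_combination h0
end

section
/- Let (M, λ_i) be an AP-space on ℝⁿ with n ≥ 2. The connection 𝚪̂^α_{μν} := Γ̂^α_{μν} − (1/(2(n−1)))(δ^α_μ C_ν + δ^α_ν C_μ) is a conformal connection: for every conformal change λ̄_i = e^{−ρ} λ_i with smooth ρ, the connection 𝚪̂̄ built from the λ̄_i equals 𝚪̂. -/
open scoped BigOperators

lemma pd_exp_mul {n : ℕ} (ρ f : (Fin n → ℝ) → ℝ) (hρ : ContDiff ℝ (⊤ : ℕ∞) ρ)
    (hf : ContDiff ℝ (⊤ : ℕ∞) f) (ν : Fin n) (x : Fin n → ℝ) :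
    pd ν (fun y => Real.exp (ρ y) * f y) x
      = Real.exp (ρ x) * pd ν ρ x * f x + Real.exp (ρ x) * pd ν f x := by
  unfold pd
  have hρd : DifferentiableAt ℝ ρ x := (hρ.differentiable (by simp)).differentiableAt
  have h1 : DifferentiableAt ℝ (fun y => Real.exp (ρ y)) x := hρd.exp
  have h2 : DifferentiableAt ℝ f x := (hf.differentiable (by simp)).differentiableAt
  rw [fderiv_fun_mul h1 h2, fderiv_exp hρd]
  simp
  ring

lemma Wconn_conf {n : ℕ} (lam lamCov : Fin n → (Fin n → ℝ) → Fin n → ℝ)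
    (hlamCov : ∀ i μ, ContDiff ℝ (⊤ : ℕ∞) fun x => lamCov i x μ)
    (hinv : ∀ (x : Fin n → ℝ) (μ ν : Fin n), ∑ i, lam i x μ * lamCov i x ν = kron μ ν)
    (ρ : (Fin n → ℝ) → ℝ) (hρ : ContDiff ℝ (⊤ : ℕ∞) ρ) (α μ ν : Fin n) (x : Fin n → ℝ) :
    Wconn (confLam ρ lam) (confLamCov ρ lamCov) α μ ν x
      = Wconn lam lamCov α μ ν x + kron α μ * pd ν ρ x := by
  unfold Wconn confLam confLamCov
  have key : ∀ i : Fin n,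
      Real.exp (-(ρ x)) * lam i x α * pd ν (fun y => Real.exp (ρ y) * lamCov i y μ) x
        = lam i x α * pd ν (fun y => lamCov i y μ) x
          + pd ν ρ x * (lam i x α * lamCov i x μ) := by
    intro i
    rw [pd_exp_mul ρ (fun y => lamCov i y μ) hρ (hlamCov i μ) ν x]
    rw [Real.exp_neg]
    have he : Real.exp (ρ x) ≠ 0 := Real.exp_ne_zero _
    field_simp
    ring
  calc (∑ i, Real.exp (-(ρ x)) * lam i x α *
          pd ν (fun y => Real.exp (ρ y) * lamCov i y μ) x)
      = ∑ i, (lam i x α * pd ν (fun y => lamCov i y μ) x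
          + pd ν ρ x * (lam i x α * lamCov i x μ)) := by
        exact Finset.sum_congr rfl fun i _ => key i
    _ = (∑ i, lam i x α * pd ν (fun y => lamCov i y μ) x)
          + pd ν ρ x * ∑ i, lam i x α * lamCov i x μ := by
        rw [Finset.sum_add_distrib, Finset.mul_sum]
    _ = _ := by rw [hinv x α μ]; ring

lemma Cvec_conf {n : ℕ} (lam lamCov : Fin n → (Fin n → ℝ) → Fin n → ℝ)
    (hlamCov : ∀ i μ, ContDiff ℝ (⊤ : ℕ∞) fun x => lamCov i x μ)
    (hinv : ∀ (x : Fin n → ℝ) (μ ν : Fin n), ∑ i, lam i x μ * lamCov i x ν = kron μ ν)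
    (ρ : (Fin n → ℝ) → ℝ) (hρ : ContDiff ℝ (⊤ : ℕ∞) ρ) (μ : Fin n) (x : Fin n → ℝ) :
    Cvec (confLam ρ lam) (confLamCov ρ lamCov) μ x
      = Cvec lam lamCov μ x + ((n : ℝ) - 1) * pd μ ρ x := by
  unfold Cvec tors
  have h1 : ∀ ε : Fin n,
      Wconn (confLam ρ lam) (confLamCov ρ lamCov) ε ε μ x
        - Wconn (confLam ρ lam) (confLamCov ρ lamCov) ε μ ε x
      = (Wconn lam lamCov ε ε μ x - Wconn lam lamCov ε μ ε x)
        + (pd μ ρ x - kron ε μ * pd ε ρ x) := by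
    intro ε
    rw [Wconn_conf lam lamCov hlamCov hinv ρ hρ ε ε μ x,
        Wconn_conf lam lamCov hlamCov hinv ρ hρ ε μ ε x]
    simp [kron]
    ring
  rw [Finset.sum_congr rfl fun ε _ => h1 ε, Finset.sum_add_distrib]
  have h2 : (∑ ε : Fin n, (pd μ ρ x - kron ε μ * pd ε ρ x))
      = ((n : ℝ) - 1) * pd μ ρ x := by
    rw [Finset.sum_sub_distrib]
    have h3 : (∑ ε : Fin n, kron ε μ * pd ε ρ x) = pd μ ρ x := by
      simp [kron]
    rw [h3, Finset.sum_const]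
    simp [mul_comm]
    ring
  rw [h2]

theorem hatConn_is_conformal
    {n : ℕ} (hn : 2 ≤ n)
    (lam lamCov : Fin n → (Fin n → ℝ) → Fin n → ℝ)
    (hlam : ∀ i μ, ContDiff ℝ (⊤ : ℕ∞) fun x => lam i x μ)
    (hlamCov : ∀ i μ, ContDiff ℝ (⊤ : ℕ∞) fun x => lamCov i x μ)
    (hinv : ∀ (x : Fin n → ℝ) (μ ν : Fin n), ∑ i, lam i x μ * lamCov i x ν = kron μ ν)
    (hinv' : ∀ (x : Fin n → ℝ) (i j : Fin n), ∑ μ, lam i x μ * lamCov j x μ = kron i j)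
    :
    ∀ (ρ : (Fin n → ℝ) → ℝ), ContDiff ℝ (⊤ : ℕ∞) ρ →
      ∀ (x : Fin n → ℝ) (α μ ν : Fin n),
        hatConn (confLam ρ lam) (confLamCov ρ lamCov) α μ ν x
          = hatConn lam lamCov α μ ν x := by
  intro ρ hρ x α μ ν
  have hne : ((n : ℝ) - 1) ≠ 0 := by
    have : (2 : ℝ) ≤ (n : ℝ) := by exact_mod_cast hn
    linarith
  unfold hatConn symW
  rw [Wconn_conf lam lamCov hlamCov hinv ρ hρ α μ ν x,
      Wconn_conf lam lamCov hlamCov hinv ρ hρ α ν μ x,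
      Cvec_conf lam lamCov hlamCov hinv ρ hρ ν x,
      Cvec_conf lam lamCov hlamCov hinv ρ hρ μ x]
  field_simp
  ring
end
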